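/- Let N ≥ 1 be an integer, α = (N!)^{−1/N}, let Z be a nonnegative real-valued random variable, and let g ∼ Gamma(N,1) be independent of Z. Then P(g > Z) ≤ E[ 1 − (1 − e^{−αZ})^N ] = ∑_{i=1}^N (−1)^{i+1}·binom(N,i)·E[e^{−iαZ}]. (This is inequality (a) in the proof of the paper's Theorem 2, combining Alzer's gamma bound with a random threshold to upper bound the successful transmission probability.) -/

import Mathlib

open MeasureTheory ProbabilityTheory Finset

/-!
Alzer's bound `P(g ≤ z) ≥ (1 - e^{-αz})^N` compares two densities on `(0, ∞)`: the Gamma(N, 1)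
density `p` and the derivative `q` of `(1 - e^{-αx})^N`. Because `α^N N! = 1`, their log-ratio is
`log (q / p) x = (1 - α) x + (N - 1) c(αx)` with `c u = log ((1 - e^{-u}) / u)`. The function `c` is
convex with `c(0⁺) = 0`, so `c u / u` is nondecreasing, hence so is `log (q / p) x / x`, and
`{q ≤ p}` is an initial segment of `(0, ∞)`. Two densities of equal mass that cross only once
compare along their tails: `∫_z^∞ p ≤ ∫_z^∞ q = 1 - (1 - e^{-αz})^N`. Independence lets one
integrate this bound against the law of `Z`, and the binomial theorem expands the expectation.
-/

open Real Set Filter Topology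

noncomputable def logOneSubExpNegDiv (u : ℝ) : ℝ := log (1 - exp (-u)) - log u

lemma one_sub_exp_neg_pos {u : ℝ} (hu : 0 < u) : 0 < 1 - exp (-u) := by
  have : exp (-u) < 1 := exp_lt_one_iff.mpr (neg_lt_zero.mpr hu)
  linarith

lemma hasDerivAt_logOneSubExpNegDiv {u : ℝ} (hu : 0 < u) :
    HasDerivAt logOneSubExpNegDiv (exp (-u) / (1 - exp (-u)) - u⁻¹) u := by
  have h := ((((hasDerivAt_neg u).exp).const_sub 1).log (one_sub_exp_neg_pos hu).ne').sub
    (hasDerivAt_log hu.ne')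
  refine h.congr_deriv ?_
  have := (one_sub_exp_neg_pos hu).ne'
  field_simp

lemma hasDerivAt_deriv_logOneSubExpNegDiv {u : ℝ} (hu : 0 < u) :
    HasDerivAt (fun v => exp (-v) / (1 - exp (-v)) - v⁻¹)
      (-exp (-u) / (1 - exp (-u)) ^ 2 + (u ^ 2)⁻¹) u := by
  have hd := (hasDerivAt_neg u).exp
  have h := (hd.div (hd.const_sub 1) (one_sub_exp_neg_pos hu).ne').sub (hasDerivAt_inv hu.ne')
  refine h.congr_deriv ?_
  have := (one_sub_exp_neg_pos hu).ne'
  field_simp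
  ring

lemma sq_mul_exp_neg_le_sq_one_sub_exp_neg {u : ℝ} (hu : 0 ≤ u) :
    u ^ 2 * exp (-u) ≤ (1 - exp (-u)) ^ 2 := by
  have hsinh : u ≤ exp (u / 2) - exp (-(u / 2)) := by
    have := self_le_sinh_iff.mpr (by linarith : 0 ≤ u / 2)
    rw [sinh_eq] at this
    linarith
  have hhalf : exp (-(u / 2)) ^ 2 = exp (-u) := by rw [← exp_nat_mul]; ring_nf
  have hkey : u * exp (-(u / 2)) ≤ 1 - exp (-u) :=
    calc u * exp (-(u / 2)) ≤ (exp (u / 2) - exp (-(u / 2))) * exp (-(u / 2)) :=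
          mul_le_mul_of_nonneg_right hsinh (exp_pos _).le
      _ = 1 - exp (-u) := by rw [sub_mul, ← exp_add, ← hhalf]; ring_nf; simp
  calc u ^ 2 * exp (-u) = (u * exp (-(u / 2))) ^ 2 := by rw [mul_pow, hhalf]
    _ ≤ (1 - exp (-u)) ^ 2 := pow_le_pow_left₀ (by positivity) hkey 2

lemma convexOn_logOneSubExpNegDiv : ConvexOn ℝ (Ioi 0) logOneSubExpNegDiv := by
  refine convexOn_of_hasDerivWithinAt2_nonneg (f' := fun v => exp (-v) / (1 - exp (-v)) - v⁻¹)
    (f'' := fun v => -exp (-v) / (1 - exp (-v)) ^ 2 + (v ^ 2)⁻¹) (convex_Ioi 0)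
    (fun u hu => (hasDerivAt_logOneSubExpNegDiv hu).continuousAt.continuousWithinAt) ?_ ?_ ?_
  all_goals rw [interior_Ioi]
  · exact fun u hu => (hasDerivAt_logOneSubExpNegDiv hu).hasDerivWithinAt
  · exact fun u hu => (hasDerivAt_deriv_logOneSubExpNegDiv hu).hasDerivWithinAt
  · intro u (hu : 0 < u)
    have h1 := one_sub_exp_neg_pos hu
    have h2 := sq_mul_exp_neg_le_sq_one_sub_exp_neg hu.le
    rw [neg_div, neg_add_eq_sub, sub_nonneg, div_le_iff₀ (by positivity), inv_mul_eq_div,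
      le_div_iff₀ (by positivity)]
    linarith

lemma tendsto_logOneSubExpNegDiv_nhdsGT_zero :
    Tendsto logOneSubExpNegDiv (𝓝[>] 0) (𝓝 0) := by
  have hslope : Tendsto (fun u : ℝ => (1 - exp (-u)) / u) (𝓝[>] 0) (𝓝 1) := by
    have h := ((hasDerivAt_neg (0 : ℝ)).exp.const_sub 1).tendsto_slope
    simp only [neg_zero, exp_zero, mul_neg, mul_one, neg_neg] at h
    refine (h.mono_left (nhdsGT_le_nhdsNE 0)).congr' ?_
    filter_upwards with u
    simp [slope_def_field]
  have hlog := ((continuousAt_log one_ne_zero).tendsto.comp hslope)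
  rw [log_one] at hlog
  refine hlog.congr' ?_
  filter_upwards [self_mem_nhdsWithin] with u (hu : 0 < u)
  exact log_div (one_sub_exp_neg_pos hu).ne' hu.ne'

theorem ConvexOn.monotoneOn_div_self {f : ℝ → ℝ} (hf : ConvexOn ℝ (Ioi 0) f)
    (h0 : Tendsto f (𝓝[>] 0) (𝓝 0)) : MonotoneOn (fun x => f x / x) (Ioi 0) := by
  intro s (hs : 0 < s) t (ht : 0 < t) hst
  have hsecant : ∀ᶠ a in 𝓝[>] 0, (f s - f a) / (s - a) ≤ (f t - f a) / (t - a) := by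
    filter_upwards [Ioo_mem_nhdsGT hs] with a ha
    exact hf.secant_mono ha.1 hs ht ha.2.ne' (ha.2.trans_le hst).ne' hst
  have hlim : ∀ x, 0 < x → Tendsto (fun a => (f x - f a) / (x - a)) (𝓝[>] 0) (𝓝 (f x / x)) := by
    intro x hx
    have hnum : Tendsto (fun a => f x - f a) (𝓝[>] 0) (𝓝 (f x - 0)) :=
      tendsto_const_nhds.sub h0
    have hden : Tendsto (fun a : ℝ => x - a) (𝓝[>] 0) (𝓝 (x - 0)) :=
      tendsto_const_nhds.sub (tendsto_nhdsWithin_of_tendsto_nhds tendsto_id)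
    rw [sub_zero] at hnum hden
    exact hnum.div hden hx.ne'
  exact le_of_tendsto_of_tendsto (hlim s hs) (hlim t ht) hsecant

/-- On `(0, ∞)`, the density of the maximum of `N` independent `Exp(α)` variables. -/
noncomputable def maxExpDensity (α : ℝ) (N : ℕ) (x : ℝ) : ℝ :=
  N * α * exp (-(α * x)) * (1 - exp (-(α * x))) ^ (N - 1)

lemma hasDerivAt_one_sub_exp_neg_mul_pow (α : ℝ) (N : ℕ) (x : ℝ) :
    HasDerivAt (fun y => (1 - exp (-(α * y))) ^ N) (maxExpDensity α N x) x := by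
  refine ((((hasDerivAt_id x).const_mul α).neg.exp).const_sub 1).pow N |>.congr_deriv ?_
  simp only [maxExpDensity, id, Pi.neg_apply]
  ring

lemma maxExpDensity_nonneg {α : ℝ} (hα : 0 ≤ α) (N : ℕ) {x : ℝ} (hx : 0 ≤ x) :
    0 ≤ maxExpDensity α N x := by
  have : exp (-(α * x)) ≤ 1 := exp_le_one_iff.mpr (neg_nonpos.mpr (mul_nonneg hα hx))
  have : 0 ≤ 1 - exp (-(α * x)) := by linarith
  unfold maxExpDensity
  positivity

lemma tendsto_one_sub_exp_neg_mul_pow_atTop {α : ℝ} (hα : 0 < α) (N : ℕ) :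
    Tendsto (fun x => (1 - exp (-(α * x))) ^ N) atTop (𝓝 1) := by
  have h : Tendsto (fun x => exp (-(α * x))) atTop (𝓝 0) :=
    tendsto_exp_atBot.comp (tendsto_neg_atTop_atBot.comp (tendsto_id.const_mul_atTop hα))
  simpa using ((tendsto_const_nhds (x := (1 : ℝ))).sub h).pow N

lemma integrableOn_maxExpDensity_Ioi {α : ℝ} (hα : 0 < α) (N : ℕ) {z : ℝ} (hz : 0 ≤ z) :
    IntegrableOn (maxExpDensity α N) (Ioi z) :=
  integrableOn_Ioi_deriv_of_nonneg' (fun x _ => hasDerivAt_one_sub_exp_neg_mul_pow α N x)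
    (fun _ hx => maxExpDensity_nonneg hα.le N (hz.trans hx.le))
    (tendsto_one_sub_exp_neg_mul_pow_atTop hα N)

lemma integral_maxExpDensity_Ioi {α : ℝ} (hα : 0 < α) (N : ℕ) {z : ℝ} (hz : 0 ≤ z) :
    ∫ x in Ioi z, maxExpDensity α N x = 1 - (1 - exp (-(α * z))) ^ N :=
  integral_Ioi_of_hasDerivAt_of_nonneg' (fun x _ => hasDerivAt_one_sub_exp_neg_mul_pow α N x)
    (fun _ hx => maxExpDensity_nonneg hα.le N (hz.trans hx.le))
    (tendsto_one_sub_exp_neg_mul_pow_atTop hα N)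

lemma gammaPDFReal_natCast_one {N : ℕ} (hN : 1 ≤ N) {x : ℝ} (hx : 0 ≤ x) :
    gammaPDFReal N 1 x = x ^ (N - 1) * exp (-x) / (N - 1).factorial := by
  obtain ⟨n, rfl⟩ := Nat.exists_eq_add_of_le' hN
  rw [gammaPDFReal, if_pos hx, Nat.cast_succ, Gamma_nat_eq_factorial, add_sub_cancel_right,
    rpow_natCast, one_rpow, one_mul, Nat.add_sub_cancel]
  ring

lemma maxExpDensity_eq_gammaPDFReal_mul_exp {α : ℝ} {N : ℕ} (hN : 1 ≤ N) (hα0 : 0 < α)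
    (hα : α ^ N * N.factorial = 1) {x : ℝ} (hx : 0 < x) :
    maxExpDensity α N x = gammaPDFReal N 1 x *
      exp ((1 - α) * x + (N - 1 : ℕ) * logOneSubExpNegDiv (α * x)) := by
  obtain ⟨n, rfl⟩ := Nat.exists_eq_add_of_le' hN
  have hαx : 0 < α * x := mul_pos hα0 hx
  have hexp : exp ((1 - α) * x) = exp (-(α * x)) * exp x := by rw [← exp_add]; ring_nf
  have hlog : exp (logOneSubExpNegDiv (α * x)) = (1 - exp (-(α * x))) / (α * x) := by
    rw [logOneSubExpNegDiv, exp_sub, exp_log (one_sub_exp_neg_pos hαx), exp_log hαx]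
  rw [gammaPDFReal_natCast_one hN hx.le, exp_add, exp_nat_mul, hlog, maxExpDensity,
    Nat.add_sub_cancel, hexp, exp_neg x, div_pow, mul_pow]
  rw [Nat.factorial_succ, pow_succ, Nat.cast_mul] at hα
  field_simp
  linear_combination (1 - exp (-(α * x))) ^ n * hα

lemma maxExpDensity_le_gammaPDFReal_of_le {α : ℝ} {N : ℕ} (hN : 1 ≤ N) (hα0 : 0 < α)
    (hα : α ^ N * N.factorial = 1) {a b : ℝ} (ha : 0 < a) (hab : a ≤ b)
    (hb : maxExpDensity α N b ≤ gammaPDFReal N 1 b) :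
    maxExpDensity α N a ≤ gammaPDFReal N 1 a := by
  set E : ℝ → ℝ := fun x => (1 - α) * x + (N - 1 : ℕ) * logOneSubExpNegDiv (α * x)
  have hle_iff : ∀ x, 0 < x → (maxExpDensity α N x ≤ gammaPDFReal N 1 x ↔ E x / x ≤ 0) := by
    intro x hx
    rw [maxExpDensity_eq_gammaPDFReal_mul_exp hN hα0 hα hx,
      mul_le_iff_le_one_right (gammaPDFReal_pos (by exact_mod_cast hN) one_pos hx),
      exp_le_one_iff, div_le_iff₀ hx, zero_mul]
  have hmono : MonotoneOn (fun x => E x / x) (Ioi 0) := by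
    intro s (hs : 0 < s) t (ht : 0 < t) hst
    have hslope := convexOn_logOneSubExpNegDiv.monotoneOn_div_self
      tendsto_logOneSubExpNegDiv_nhdsGT_zero (mul_pos hα0 hs) (mul_pos hα0 ht)
      (mul_le_mul_of_nonneg_left hst hα0.le)
    have hE : ∀ x, 0 < x → E x / x = (1 - α) +
        (N - 1 : ℕ) * α * (logOneSubExpNegDiv (α * x) / (α * x)) := by
      intro x hx
      simp only [E]
      field_simp
    simp only [hE s hs, hE t ht]
    gcongr
  have hb0 : 0 < b := ha.trans_le hab
  exact (hle_iff a ha).2 ((hmono ha hb0 hab).trans ((hle_iff b hb0).1 hb))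

theorem setIntegral_Ioi_le_of_single_crossing {p q : ℝ → ℝ} (hp : IntegrableOn p (Ioi 0))
    (hq : IntegrableOn q (Ioi 0)) (hpq : ∫ x in Ioi 0, p x ≤ ∫ x in Ioi 0, q x)
    (hcross : ∀ a b, 0 < a → a ≤ b → q b ≤ p b → q a ≤ p a) {z : ℝ} (hz : 0 ≤ z) :
    ∫ x in Ioi z, p x ≤ ∫ x in Ioi z, q x := by
  by_cases hhead : ∀ x ∈ Ioc 0 z, q x ≤ p x
  · have hhead_int : ∫ x in Ioc 0 z, q x ≤ ∫ x in Ioc 0 z, p x :=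
      setIntegral_mono_on (hq.mono_set Ioc_subset_Ioi_self) (hp.mono_set Ioc_subset_Ioi_self)
        measurableSet_Ioc hhead
    rw [← Ioc_union_Ioi_eq_Ioi hz,
      setIntegral_union (Ioc_disjoint_Ioi le_rfl) measurableSet_Ioi
        (hp.mono_set Ioc_subset_Ioi_self) (hp.mono_set (Ioi_subset_Ioi hz)),
      setIntegral_union (Ioc_disjoint_Ioi le_rfl) measurableSet_Ioi
        (hq.mono_set Ioc_subset_Ioi_self) (hq.mono_set (Ioi_subset_Ioi hz))] at hpq
    linarith
  · push Not at hhead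
    obtain ⟨x, ⟨hx0, hxz⟩, hpx⟩ := hhead
    refine setIntegral_mono_on (hp.mono_set (Ioi_subset_Ioi hz))
      (hq.mono_set (Ioi_subset_Ioi hz)) measurableSet_Ioi fun y (hy : z < y) => ?_
    by_contra! hqy
    exact hpx.not_ge (hcross x y hx0 (hxz.trans hy.le) hqy.le)

lemma integrable_gammaPDFReal {a r : ℝ} (ha : 0 < a) (hr : 0 < r) :
    Integrable (gammaPDFReal a r) := by
  have h := integrable_toReal_of_lintegral_ne_top
    (measurable_gammaPDFReal a r).ennreal_ofReal.aemeasurable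
    (by simpa [gammaPDF] using (lintegral_gammaPDF_eq_one ha hr).trans_ne ENNReal.one_ne_top)
  simpa [ENNReal.toReal_ofReal (gammaPDFReal_nonneg ha hr _)] using h

lemma measureReal_gammaMeasure {a r : ℝ} (ha : 0 < a) (hr : 0 < r) {s : Set ℝ}
    (hs : MeasurableSet s) : (gammaMeasure a r).real s = ∫ x in s, gammaPDFReal a r x := by
  rw [measureReal_def, gammaMeasure, withDensity_apply _ hs,
    integral_eq_lintegral_of_nonneg_ae (ae_of_all _ (gammaPDFReal_nonneg ha hr))
      (measurable_gammaPDFReal a r).aestronglyMeasurable]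
  rfl

theorem gammaMeasure_Ioi_le_one_sub_one_sub_exp_neg_pow {α : ℝ} {N : ℕ} (hN : 1 ≤ N)
    (hα0 : 0 < α) (hα : α ^ N * N.factorial = 1) {z : ℝ} (hz : 0 ≤ z) :
    gammaMeasure N 1 (Ioi z) ≤ ENNReal.ofReal (1 - (1 - exp (-(α * z))) ^ N) := by
  have hN0 : (0 : ℝ) < N := by exact_mod_cast hN
  have := isProbabilityMeasure_gammaMeasure hN0 one_pos
  have hmass : ∫ x in Ioi 0, gammaPDFReal N 1 x ≤ ∫ x in Ioi 0, maxExpDensity α N x := by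
    rw [← measureReal_gammaMeasure hN0 one_pos measurableSet_Ioi,
      integral_maxExpDensity_Ioi hα0 N le_rfl, mul_zero, neg_zero, exp_zero, sub_self,
      zero_pow (by omega), sub_zero]
    exact measureReal_le_one
  rw [← ofReal_measureReal, measureReal_gammaMeasure hN0 one_pos measurableSet_Ioi,
    ← integral_maxExpDensity_Ioi hα0 N hz]
  exact ENNReal.ofReal_le_ofReal <| setIntegral_Ioi_le_of_single_crossing
    (integrable_gammaPDFReal hN0 one_pos).integrableOn
    (integrableOn_maxExpDensity_Ioi hα0 N le_rfl) hmass
    (fun _ _ ha hab => maxExpDensity_le_gammaPDFReal_of_le hN hα0 hα ha hab) hz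

lemma one_sub_one_sub_pow_eq_sum {R : Type*} [CommRing R] (t : R) (N : ℕ) :
    1 - (1 - t) ^ N = ∑ i ∈ Finset.Icc 1 N, (-1) ^ (i + 1) * (N.choose i : R) * t ^ i := by
  have hrange : range (N + 1) = insert 0 (Finset.Icc 1 N) := by
    ext i
    simp only [Finset.mem_range, Finset.mem_insert, Finset.mem_Icc]
    omega
  rw [← neg_add_eq_sub t 1, add_pow, hrange, sum_insert (by simp)]
  simp only [pow_zero, one_pow, mul_one, Nat.choose_zero_right, Nat.cast_one,
    sub_add_cancel_left, ← sum_neg_distrib]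
  refine sum_congr rfl fun i _ => ?_
  rw [neg_pow, pow_succ]
  ring

lemma one_sub_one_sub_exp_neg_pow_mem_Icc {u : ℝ} (hu : 0 ≤ u) (N : ℕ) :
    1 - (1 - exp (-u)) ^ N ∈ Set.Icc 0 1 := by
  have h1 : exp (-u) ≤ 1 := exp_le_one_iff.mpr (neg_nonpos.mpr hu)
  have h0 : 0 < exp (-u) := exp_pos _
  constructor
  · linarith [pow_le_one₀ (n := N) (by linarith : 0 ≤ 1 - exp (-u)) (by linarith)]
  · linarith [pow_nonneg (by linarith : 0 ≤ 1 - exp (-u)) N]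

lemma rpow_neg_one_div_natCast_pow_mul_self {x : ℝ} (hx : 0 < x) {n : ℕ} (hn : n ≠ 0) :
    (x ^ (-(1 : ℝ) / n)) ^ n * x = 1 := by
  rw [← rpow_natCast, ← rpow_mul hx.le, div_mul_cancel₀ _ (by positivity), rpow_neg_one,
    inv_mul_cancel₀ hx.ne']

section Probability

variable {Ω : Type*} [MeasurableSpace Ω] {μ : Measure Ω} [IsFiniteMeasure μ]

lemma ProbabilityTheory.IndepFun.measure_lt_eq_lintegral_map_Ioi {X Y : Ω → ℝ} (hX : Measurable X)
    (hY : Measurable Y) (h : IndepFun X Y μ) :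
    μ {ω | X ω < Y ω} = ∫⁻ ω, μ.map Y (Ioi (X ω)) ∂μ := by
  have hs : MeasurableSet {p : ℝ × ℝ | p.1 < p.2} := measurableSet_lt measurable_fst measurable_snd
  have hanti : Antitone fun x => μ.map Y (Ioi x) := fun _ _ hab => measure_mono (Ioi_subset_Ioi hab)
  calc μ {ω | X ω < Y ω} = μ.map (fun ω => (X ω, Y ω)) {p | p.1 < p.2} :=
        (Measure.map_apply (hX.prodMk hY) hs).symm
    _ = ∫⁻ x, μ.map Y (Ioi x) ∂(μ.map X) := by
        rw [(indepFun_iff_map_prod_eq_prod_map_map hX.aemeasurable hY.aemeasurable).mp h,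
          Measure.prod_apply hs]
        rfl
    _ = ∫⁻ ω, μ.map Y (Ioi (X ω)) ∂μ := lintegral_map hanti.measurable hX

lemma integrable_exp_neg_mul_of_nonneg {Z : Ω → ℝ} (hZm : Measurable Z) (hZ0 : ∀ ω, 0 ≤ Z ω)
    {c : ℝ} (hc : 0 ≤ c) : Integrable (fun ω => exp (-(c * Z ω))) μ :=
  Integrable.of_bound (by fun_prop) 1 <| ae_of_all _ fun ω => by
    rw [norm_of_nonneg (exp_pos _).le, exp_le_one_iff, neg_nonpos]
    exact mul_nonneg hc (hZ0 ω)

lemma integral_one_sub_one_sub_exp_neg_pow {Z : Ω → ℝ} (hZm : Measurable Z)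
    (hZ0 : ∀ ω, 0 ≤ Z ω) {α : ℝ} (hα : 0 ≤ α) (N : ℕ) :
    ∫ ω, (1 - (1 - exp (-(α * Z ω))) ^ N) ∂μ =
      ∑ i ∈ Finset.Icc 1 N,
        (-1 : ℝ) ^ (i + 1) * (N.choose i : ℝ) * ∫ ω, exp (-(i * α * Z ω)) ∂μ := by
  have hpow : ∀ (i : ℕ) ω, exp (-(α * Z ω)) ^ i = exp (-(i * α * Z ω)) := fun i ω => by
    rw [← exp_nat_mul]
    ring_nf
  simp_rw [one_sub_one_sub_pow_eq_sum, hpow]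
  rw [integral_finsetSum _ fun i _ => (integrable_exp_neg_mul_of_nonneg hZm hZ0
    (by positivity)).const_mul _]
  simp_rw [integral_const_mul]

end Probability

/-- Inequality (a) in the proof of the paper's Theorem 2: for `g ∼ Gamma(N,1)` independent of a
nonnegative random variable `Z`, with `α = (N!)^{−1/N}`,
`P(g > Z) ≤ E[1 − (1 − e^{−αZ})^N] = ∑_{i=1}^N (−1)^{i+1}·binom(N,i)·E[e^{−iαZ}]`. -/
theorem prob_gamma_gt_le_alzer_bound
    {Ω : Type*} [MeasurableSpace Ω] (μ : Measure Ω) [IsProbabilityMeasure μ]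
    (N : ℕ) (hN : 1 ≤ N) (α : ℝ) (hα : α = (N.factorial : ℝ) ^ (-(1 : ℝ) / (N : ℝ)))
    (Z : Ω → ℝ) (hZm : Measurable Z) (hZ0 : ∀ ω, 0 ≤ Z ω)
    (g : Ω → ℝ) (hgm : Measurable g)
    (hlaw : Measure.map g μ = gammaMeasure (N : ℝ) 1)
    (hindep : IndepFun g Z μ) :
    μ {ω | Z ω < g ω} ≤
      ENNReal.ofReal (∫ ω, (1 - (1 - Real.exp (-(α * Z ω))) ^ N) ∂μ) ∧
    ∫ ω, (1 - (1 - Real.exp (-(α * Z ω))) ^ N) ∂μ =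
      ∑ i ∈ Finset.Icc 1 N,
        (-1 : ℝ) ^ (i + 1) * (N.choose i : ℝ) * ∫ ω, Real.exp (-((i : ℝ) * α * Z ω)) ∂μ := by
  have hα0 : 0 < α := hα ▸ by positivity
  have hαN : α ^ N * N.factorial = 1 :=
    hα ▸ rpow_neg_one_div_natCast_pow_mul_self (by positivity) (by omega)
  have hαZ : ∀ ω, 0 ≤ α * Z ω := fun ω => mul_nonneg hα0.le (hZ0 ω)
  refine ⟨?_, integral_one_sub_one_sub_exp_neg_pow hZm hZ0 hα0.le N⟩
  have hint : Integrable (fun ω => 1 - (1 - exp (-(α * Z ω))) ^ N) μ :=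
    Integrable.of_bound (by fun_prop) 1 <| ae_of_all _ fun ω => by
      obtain ⟨h0, h1⟩ := one_sub_one_sub_exp_neg_pow_mem_Icc (hαZ ω) N
      rwa [norm_of_nonneg h0]
  calc μ {ω | Z ω < g ω} = ∫⁻ ω, gammaMeasure N 1 (Ioi (Z ω)) ∂μ := by
        rw [← hlaw]
        exact hindep.symm.measure_lt_eq_lintegral_map_Ioi hZm hgm
    _ ≤ ∫⁻ ω, ENNReal.ofReal (1 - (1 - exp (-(α * Z ω))) ^ N) ∂μ :=
        lintegral_mono fun ω =>
          gammaMeasure_Ioi_le_one_sub_one_sub_exp_neg_pow hN hα0 hαN (hZ0 ω)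
    _ = ENNReal.ofReal (∫ ω, (1 - (1 - exp (-(α * Z ω))) ^ N) ∂μ) :=
        (ofReal_integral_eq_lintegral_ofReal hint
          (ae_of_all _ fun ω => (one_sub_one_sub_exp_neg_pow_mem_Icc (hαZ ω) N).1)).symm
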